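/- Let A be an associative algebra over a field of characteristic zero and define the n-bracket [X_1,...,X_n] = ∑_{σ∈S_n} sgn(σ) X_{σ(1)}⋯X_{σ(n)}. Then (1/((n−1)! n!)) ∑_{σ∈S_{2n−1}} sgn(σ) [[X_{σ(1)},...,X_{σ(n)}], X_{σ(n+1)},...,X_{σ(2n−1)}] equals 0 if n is even, and equals n·[X_1,...,X_{2n−1}] if n is odd. -/

import Mathlib

/-- The fully antisymmetrized `n`-bracket in an associative algebra. -/
def mbracket {A : Type*} [Ring A] {n : ℕ} (X : Fin n → A) : A :=
  ∑ σ : Equiv.Perm (Fin n), (Equiv.Perm.sign σ : ℤ) • (List.ofFn fun i => X (σ i)).prod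

/-!
Expanding both brackets writes each term of the double sum as `± X_{σ(π 0)} ⋯ X_{σ(π (2n-2))}`,
where `π` records the order `ρ` inside the inner bracket, the position `k` at which the inner
product lands in the outer word, and the order `h` of the remaining letters. Summing over `σ`
turns such a term into `sign π • [X_1, …, X_{2n-1}]`. As `π` moves a block of `n` letters past
`k` letters, `sign π = sign ρ * sign h * (-1)^(k n)`, which against the outer sign
`(-1)^k * sign h` leaves `(-1)^(k (n-1))`. Hence the double sum is
`n! (n-1)! ∑_{k<n} (-1)^(k (n-1)) • [X_1, …, X_{2n-1}]`, and the sum is `n` for odd `n`, `0` for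
even `n`.
-/

open Equiv Equiv.Perm List

theorem List.ofFn_comp_cycleRange {α : Type*} {n : ℕ} (v : Fin n → α) (i : Fin n) :
    ofFn (v ∘ i.cycleRange) = ((ofFn v).take (i + 1)).rotate 1 ++ (ofFn v).drop (i + 1) := by
  have hi : (i : ℕ) + 1 ≤ n := i.isLt
  refine List.ext_getElem (by simp) fun t h₁ h₂ => ?_
  simp only [length_ofFn] at h₁
  rw [List.getElem_ofFn, Function.comp_apply, getElem_append]
  split_ifs with ht
  · simp only [length_rotate, length_take, length_ofFn, min_eq_left hi] at ht
    simp only [getElem_rotate, getElem_take, List.getElem_ofFn, length_take, length_ofFn,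
      min_eq_left hi]
    congr 1
    ext
    rw [Fin.coe_cycleRange_of_le (Fin.le_def.2 (by simp; omega))]
    split_ifs with hti <;> simp only [Fin.ext_iff] at hti ⊢
    · simp [hti]
    · rw [Nat.mod_eq_of_lt (by omega)]
  · simp only [length_rotate, length_take, length_ofFn, min_eq_left hi] at ht
    simp only [getElem_drop, List.getElem_ofFn]
    congr 1
    ext
    rw [Fin.cycleRange_of_gt (Fin.lt_def.2 (by simp; omega))]
    simp; omega

theorem List.ofFn_comp_cycleRange_pow {α : Type*} {n : ℕ} (v : Fin n → α) (i : Fin n) (r : ℕ) :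
    ofFn (v ∘ ⇑(i.cycleRange ^ r)) = ((ofFn v).take (i + 1)).rotate r ++ (ofFn v).drop (i + 1) := by
  induction r with
  | zero => simp
  | succ r ih =>
    have hlen : (((ofFn v).take (i + 1)).rotate r).length = i + 1 := by simp
    rw [pow_succ, coe_mul, ← Function.comp_assoc, ofFn_comp_cycleRange, ih, take_left' hlen,
      drop_left' hlen, rotate_rotate]

theorem List.ofFn_insertNth {α : Type*} {q : ℕ} (k : Fin (q + 1)) (y : α) (b : Fin q → α) :
    ofFn (k.insertNth y b) = (ofFn b).take k ++ y :: (ofFn b).drop k := by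
  rw [← Fin.cons_comp_cycleRange, ofFn_comp_cycleRange, ofFn_cons, take_succ_cons, drop_succ_cons,
    rotate_cons_succ, rotate_zero, append_assoc, singleton_append]

def appendPerm {a b : ℕ} (ρ : Perm (Fin a)) (τ : Perm (Fin b)) : Perm (Fin (a + b)) :=
  finSumFinEquiv.permCongr (ρ.sumCongr τ)

theorem sign_appendPerm {a b : ℕ} (ρ : Perm (Fin a)) (τ : Perm (Fin b)) :
    sign (appendPerm ρ τ) = sign ρ * sign τ := by
  rw [appendPerm, sign_permCongr, sign_sumCongr]

theorem append_comp_appendPerm {α : Type*} {a b : ℕ} (u : Fin a → α) (v : Fin b → α)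
    (ρ : Perm (Fin a)) (τ : Perm (Fin b)) :
    Fin.append u v ∘ appendPerm ρ τ = Fin.append (u ∘ ρ) (v ∘ τ) := by
  ext i
  induction i using Fin.addCases <;> simp [appendPerm, permCongr_apply]

def blockShift (n q : ℕ) (k : Fin (q + 1)) : Perm (Fin (n + 1 + q)) :=
  Fin.cycleRange ⟨k + n, by omega⟩ ^ (n + 1)

theorem ofFn_append_comp_blockShift {α : Type*} {n q : ℕ} (a : Fin (n + 1) → α) (b : Fin q → α)
    (k : Fin (q + 1)) :
    ofFn (Fin.append a b ∘ blockShift n q k) = (ofFn b).take k ++ ofFn a ++ (ofFn b).drop k := by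
  have hk : (k : ℕ) ≤ q := Nat.lt_succ_iff.1 k.isLt
  have hlen : k + n + 1 = (ofFn a).length + k := by simp; omega
  rw [blockShift, ofFn_comp_cycleRange_pow, ofFn_fin_append, Fin.val_mk, hlen,
    take_length_add_append, drop_length_add_append]
  simpa using congrArg (· ++ (ofFn b).drop k) (rotate_append_length_eq (ofFn a) ((ofFn b).take k))

theorem prod_ofFn_insertNth_prod {M : Type*} [Monoid M] {n q : ℕ} (a : Fin (n + 1) → M)
    (b : Fin q → M) (k : Fin (q + 1)) :
    (ofFn (k.insertNth (ofFn a).prod b)).prod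
      = (ofFn (Fin.append a b ∘ blockShift n q k)).prod := by
  rw [ofFn_insertNth, ofFn_append_comp_blockShift]
  simp only [prod_append, prod_cons, mul_assoc]

theorem neg_one_pow_mul_sign_blockShift (n q : ℕ) (k : Fin (q + 1)) :
    (-1 : ℤ) ^ (k : ℕ) * (sign (blockShift n q k) : ℤ) = (-1) ^ (k * n : ℕ) := by
  have hpar : Even (2 * k + n * (n + 1)) := (even_two_mul _).add (Nat.even_mul_succ_self n)
  rw [blockShift, map_pow, Fin.sign_cycleRange]
  push_cast
  rw [← pow_mul, ← pow_add,
    show (k : ℕ) + (k + n) * (n + 1) = k * n + (2 * k + n * (n + 1)) by ring, pow_add,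
    hpar.neg_one_pow, mul_one]

theorem bijective_decomposeFin_symm_mul_cycleRange (q : ℕ) :
    Function.Bijective fun x : Fin (q + 1) × Perm (Fin q) =>
      decomposeFin.symm (0, x.2) * x.1.cycleRange := by
  refine (Fintype.bijective_iff_injective_and_card _).2 ⟨?_, by
    simp [Fintype.card_perm, Nat.factorial_succ]⟩
  rintro ⟨k, τ⟩ ⟨k', τ'⟩ h
  dsimp only at h
  have hk : k = k' := by
    have h₀ (k : Fin (q + 1)) (τ : Perm (Fin q)) :
        (decomposeFin.symm (0, τ) * k.cycleRange) k = 0 := by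
      simp [decomposeFin_symm_apply_zero]
    refine (decomposeFin.symm (0, τ') * k'.cycleRange).injective ?_
    rw [h₀, ← h, h₀]
  subst hk
  simpa using decomposeFin.symm.injective (mul_right_cancel h)

section Ring

variable {A : Type*} [Ring A]

theorem mbracket_eq_sum_comp {n : ℕ} (X : Fin n → A) :
    mbracket X = ∑ σ : Perm (Fin n), (sign σ : ℤ) • (ofFn (X ∘ σ)).prod :=
  rfl

theorem sum_sign_smul_prod_ofFn_comp_mul {N : ℕ} (X : Fin N → A) (π : Perm (Fin N)) :
    ∑ σ : Perm (Fin N), (sign σ : ℤ) • (ofFn (X ∘ ⇑(σ * π))).prod = (sign π : ℤ) • mbracket X := by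
  rw [mbracket, Finset.smul_sum]
  refine Fintype.sum_equiv (Equiv.mulRight π) _ _ fun σ => ?_
  rw [coe_mulRight, smul_smul, map_mul, ← Units.val_mul, mul_left_comm, Int.units_mul_self, mul_one]
  rfl

theorem sum_sign_smul_sum_smul_prod_ofFn_comp_mul {N : ℕ} {ι : Type*} [Fintype ι]
    (X : Fin N → A) (c : ι → ℤ) (π : ι → Perm (Fin N)) :
    ∑ σ : Perm (Fin N), (sign σ : ℤ) • ∑ i, c i • (ofFn (X ∘ ⇑(σ * π i))).prod
      = (∑ i, c i * sign (π i)) • mbracket X := by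
  simp_rw [Finset.smul_sum, smul_comm _ (c _)]
  rw [Finset.sum_comm, Finset.sum_smul]
  simp_rw [← Finset.smul_sum, sum_sign_smul_prod_ofFn_comp_mul, smul_smul]

def mbracketAlternating (A : Type*) [Ring A] (n : ℕ) : A [⋀^Fin n]→ₗ[ℤ] A :=
  MultilinearMap.alternatization (MultilinearMap.mkPiAlgebraFin ℤ n A)

theorem mbracketAlternating_apply {n : ℕ} (X : Fin n → A) :
    mbracketAlternating A n X = mbracket X := by
  simp [mbracketAlternating, mbracket, MultilinearMap.alternatization_apply, Units.smul_def]

theorem mbracket_cons_sum {n : ℕ} {ι : Type*} (s : Finset ι) (c : ι → ℤ) (y : ι → A)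
    (b : Fin n → A) :
    mbracket (Fin.cons (∑ i ∈ s, c i • y i) b : Fin (n + 1) → A)
      = ∑ i ∈ s, c i • mbracket (Fin.cons (y i) b : Fin (n + 1) → A) := by
  let L := (mbracketAlternating A (n + 1)).toMultilinearMap.toLinearMap (Fin.cons 0 b) 0
  have hL (x : A) : mbracket (Fin.cons x b : Fin (n + 1) → A) = L x := by
    simp [L, Fin.update_cons_zero, mbracketAlternating_apply]
  simp only [hL, map_sum, map_zsmul]

theorem mbracket_cons_eq_sum_insertNth {q : ℕ} (y : A) (b : Fin q → A) :
    mbracket (Fin.cons y b : Fin (q + 1) → A)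
      = ∑ x : Fin (q + 1) × Perm (Fin q),
          ((-1) ^ (x.1 : ℕ) * sign x.2 : ℤ) • (ofFn (x.1.insertNth y (b ∘ x.2))).prod := by
  rw [mbracket_eq_sum_comp]
  refine (Fintype.sum_bijective _ (bijective_decomposeFin_symm_mul_cycleRange q) _ _
    fun x => ?_).symm
  have hcons : (Fin.cons y b : Fin (q + 1) → A) ∘ decomposeFin.symm (0, x.2)
      = Fin.cons y (b ∘ x.2) := by
    ext i
    induction i using Fin.cases <;> simp [decomposeFin_symm_apply_succ]
  rw [map_mul, decomposeFin.symm_sign, Fin.sign_cycleRange, coe_mul, ← Function.comp_assoc, hcons,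
    Fin.cons_comp_cycleRange]
  simp [mul_comm]

theorem mbracket_cons_mbracket_eq_sum {n q : ℕ} (w : Fin (n + 1 + q) → A) :
    mbracket (Fin.cons (mbracket fun j => w (Fin.castAdd q j)) fun j => w (Fin.natAdd (n + 1) j))
      = ∑ x : Perm (Fin (n + 1)) × Fin (q + 1) × Perm (Fin q),
          (sign x.1 * ((-1) ^ (x.2.1 : ℕ) * sign x.2.2) : ℤ) •
            (ofFn (w ∘ ⇑(appendPerm x.1 x.2.2 * blockShift n q x.2.1))).prod := by
  set a : Fin (n + 1) → A := fun j => w (Fin.castAdd q j)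
  set b : Fin q → A := fun j => w (Fin.natAdd (n + 1) j)
  have hw : w = Fin.append a b := Fin.append_castAdd_natAdd.symm
  rw [mbracket_eq_sum_comp a, mbracket_cons_sum, Fintype.sum_prod_type]
  refine Finset.sum_congr rfl fun ρ _ => ?_
  rw [mbracket_cons_eq_sum_insertNth, Finset.smul_sum]
  refine Finset.sum_congr rfl fun x _ => ?_
  rw [smul_smul, prod_ofFn_insertNth_prod, coe_mul, ← Function.comp_assoc, hw,
    append_comp_appendPerm]

/-- The length is a variable `N` so that the statement applies verbatim to `Fin (2 * m + 1)`. -/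
theorem sum_sign_smul_mbracket_cons_mbracket {N : ℕ} (n q : ℕ) (hN : n + 1 + q = N)
    (X : Fin N → A) :
    ∑ σ : Perm (Fin N), (sign σ : ℤ) •
        mbracket (Fin.cons (mbracket fun j : Fin (n + 1) => X (σ (Fin.castLE (by omega) j)))
          (fun j : Fin q => X (σ ⟨n + 1 + j.1, by omega⟩)))
      = (((n + 1).factorial * q.factorial : ℕ) * ∑ k ∈ Finset.range (q + 1), (-1) ^ (k * n) : ℤ) •
          mbracket X := by
  subst hN
  have hcoeff (x : Perm (Fin (n + 1)) × Fin (q + 1) × Perm (Fin q)) :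
      (sign x.1 * ((-1) ^ (x.2.1 : ℕ) * sign x.2.2) : ℤ) *
        sign (appendPerm x.1 x.2.2 * blockShift n q x.2.1) = (-1) ^ (x.2.1 * n : ℕ) := by
    rw [← neg_one_pow_mul_sign_blockShift, map_mul, sign_appendPerm]
    simp only [Units.val_mul]
    ring_nf
    simp only [Int.isUnit_sq (Units.isUnit _), one_mul]
  calc _ = ∑ σ : Perm (Fin (n + 1 + q)), (sign σ : ℤ) •
          ∑ x : Perm (Fin (n + 1)) × Fin (q + 1) × Perm (Fin q),
            (sign x.1 * ((-1) ^ (x.2.1 : ℕ) * sign x.2.2) : ℤ) •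
              (ofFn (X ∘ ⇑(σ * (appendPerm x.1 x.2.2 * blockShift n q x.2.1)))).prod :=
        Finset.sum_congr rfl fun σ _ => congrArg _ (mbracket_cons_mbracket_eq_sum (X ∘ σ))
    _ = _ := by
      rw [sum_sign_smul_sum_smul_prod_ofFn_comp_mul]
      simp only [hcoeff, Fintype.sum_prod_type, Finset.sum_const, Finset.card_univ,
        Fintype.card_perm, Fintype.card_fin, nsmul_eq_mul, ← Finset.mul_sum,
        Fin.sum_univ_eq_sum_range (fun k => (-1 : ℤ) ^ (k * n))]
      push_cast
      rw [mul_assoc]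

end Ring

theorem sum_range_neg_one_pow_mul_self (m : ℕ) :
    ∑ k ∈ Finset.range (m + 1), (-1 : ℤ) ^ (k * m) = if Even (m + 1) then 0 else (m + 1 : ℤ) := by
  simp_rw [pow_mul']
  rcases Nat.even_or_odd m with hm | hm
  · simp [hm.neg_one_pow, Nat.even_add_one, hm]
  · have hm1 : Even (m + 1) := Nat.even_add_one.2 (Nat.not_even_iff_odd.2 hm)
    rw [hm.neg_one_pow, neg_one_geom_sum, if_pos hm1, if_pos hm1]

/-- with n = m+1: the weighted antisymmetrized double bracket equals 0
for n even and n·[X_1,...,X_{2n-1}] for n odd. -/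
theorem mbracket_generalized_jacobi_sum {A : Type*} [Ring A] [Algebra ℚ A]
    (m : ℕ) (X : Fin (2 * m + 1) → A) :
    ((1 : ℚ) / ((m.factorial : ℚ) * ((m + 1).factorial : ℚ))) •
        ∑ σ : Equiv.Perm (Fin (2 * m + 1)), (Equiv.Perm.sign σ : ℤ) •
          mbracket (Fin.cons
            (mbracket fun j : Fin (m + 1) => X (σ (Fin.castLE (by omega) j)))
            (fun j : Fin m => X (σ ⟨m + 1 + j.1, by have := j.isLt; omega⟩)))
      = if Even (m + 1) then 0 else ((m + 1 : ℕ) : ℚ) • mbracket X := by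
  rw [sum_sign_smul_mbracket_cons_mbracket m m (by ring) X, sum_range_neg_one_pow_mul_self,
    ← Int.cast_smul_eq_zsmul ℚ, smul_smul]
  split_ifs
  · simp
  · congr 1
    push_cast
    field_simp
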